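/- arXiv:2602.04572 — 2 statements merged into one kernel-verified Lean document; each statement's English description precedes it below -/
import Mathlib

section
/- With the setup of the subset-sum reduction (a : Fin n → ℝ, k > 0, T > 0, M = 2T/k, f i = a i, g i = M - a i, all a i ∈ [0, M]), a subset S with |S| = k satisfies (∑_{i∈S} f i)(∑_{i∈S} g i) = T^2 if and only if ∑_{i∈S} a i = T. -/
theorem nash_product_eq_Tsq_iff (n k : ℕ) (hk : 0 < k)
    (T : ℝ) (hT : 0 < T) (M : ℝ) (hM : M = 2 * T / k)
    (a : Fin n → ℝ) (ha : ∀ i, 0 ≤ a i) (haM : ∀ i, a i ≤ M)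
    (f g : Fin n → ℝ) (hf : ∀ i, f i = a i) (hg : ∀ i, g i = M - a i)
    (S : Finset (Fin n)) (hS : S.card = k) :
    (∑ i ∈ S, f i) * (∑ i ∈ S, g i) = T ^ 2 ↔ ∑ i ∈ S, a i = T := by
  have hf' : ∑ i ∈ S, f i = ∑ i ∈ S, a i := Finset.sum_congr rfl (fun i _ => hf i)
  have hg' : ∑ i ∈ S, g i = (k : ℝ) * M - ∑ i ∈ S, a i := by
    rw [Finset.sum_congr rfl (fun i _ => hg i), Finset.sum_sub_distrib,
      Finset.sum_const, hS, nsmul_eq_mul]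
  have hkM : (k : ℝ) * M = 2 * T := by
    rw [hM]; field_simp
  rw [hf', hg', hkM]
  set s := ∑ i ∈ S, a i
  constructor
  · intro h
    nlinarith [sq_nonneg (s - T)]
  · intro h; rw [h]; ring
end

section
/- If in the subset-sum reduction no subset S of size k satisfies ∑_{i∈S} a i = T, then every size-k subset has Nash product (∑_{i∈S} f i)(∑_{i∈S} g i) strictly less than T^2. -/
theorem no_subset_sum_implies_strict_lt (n k : ℕ) (hk : 0 < k)
    (T : ℝ) (hT : 0 < T) (M : ℝ) (hM : M = 2 * T / k)
    (a : Fin n → ℝ) (ha : ∀ i, 0 ≤ a i)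
    (f g : Fin n → ℝ) (hf : ∀ i, f i = a i) (hg : ∀ i, g i = M - a i)
    (hno : ∀ S : Finset (Fin n), S.card = k → ∑ i ∈ S, a i ≠ T) :
    ∀ S : Finset (Fin n), S.card = k →
      (∑ i ∈ S, f i) * (∑ i ∈ S, g i) < T ^ 2 := by
  intro S hS
  have hs := hno S hS
  have hfs : ∑ i ∈ S, f i = ∑ i ∈ S, a i := Finset.sum_congr rfl fun i _ => hf i
  have hgs : ∑ i ∈ S, g i = k * M - ∑ i ∈ S, a i := by
    simp [hg, Finset.sum_sub_distrib, hS, mul_comm]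
  have hkM : (k : ℝ) * M = 2 * T := by
    have hk0 : (k : ℝ) ≠ 0 := (Nat.cast_pos.mpr hk).ne'
    rw [hM]
    field_simp
  have hne : (∑ i ∈ S, a i) - T ≠ 0 := sub_ne_zero.mpr hs
  have hpos : 0 < ((∑ i ∈ S, a i) - T)^2 := by positivity
  rw [hfs, hgs, hkM]
  nlinarith [hpos]
end
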